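/- For any graph G without isolated vertices, G has a mixed dominating set of size at most k if and only if G has a nice mixed dominating set of size at most k. -/

import Mathlib

variable {V : Type*} [Fintype V] [DecidableEq V]

/-- The set of endpoints of an edge set `M`, i.e. `V(M)`. -/
def mVerts (M : Finset (Sym2 V)) : Finset V :=
  Finset.univ.filter fun v => ∃ e ∈ M, v ∈ e

/-- `D ∪ M` is a mixed dominating set of `G`: every vertex outside `D ∪ V(M)` has a
neighbor in `D`, and every edge outside `M` has an endpoint in `D ∪ V(M)`. -/
def IsMDS (G : SimpleGraph V) (D : Finset V) (M : Finset (Sym2 V)) : Prop :=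
  (∀ e ∈ M, e ∈ G.edgeSet) ∧
  (∀ v : V, v ∉ D → v ∉ mVerts M → ∃ u ∈ D, G.Adj u v) ∧
  (∀ e ∈ G.edgeSet, e ∉ M → ∃ v, v ∈ e ∧ (v ∈ D ∨ v ∈ mVerts M))

/-- `v` is a private neighbor of `u ∈ D`: `v ∉ D ∪ V(M)` and `N(v) ∩ D = {u}`. -/
def PrivNbr (G : SimpleGraph V) (D : Finset V) (M : Finset (Sym2 V)) (u v : V) : Prop :=
  v ∉ D ∧ v ∉ mVerts M ∧ G.Adj u v ∧ ∀ w ∈ D, G.Adj w v → w = u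

/-- A nice mixed dominating set: additionally `D ∩ V(M) = ∅` and every `u ∈ D` has
at least two private neighbors. -/
def IsNiceMDS (G : SimpleGraph V) (D : Finset V) (M : Finset (Sym2 V)) : Prop :=
  IsMDS G D M ∧ Disjoint D (mVerts M) ∧
    ∀ u ∈ D, ∃ v₁ v₂, v₁ ≠ v₂ ∧ PrivNbr G D M u v₁ ∧ PrivNbr G D M u v₂

/-!
Three local moves turn any mixed dominating set `(D, M)` into a nice one without increasing
`|D| + |M|`, and each strictly decreases `3|D| + |M| + #{e ∈ M : e meets D}`, so repeating them
terminates. For `u ∈ D` on an edge `uw ∈ M`: if `w ∉ D` has a neighbour `x ∉ D`, swap `uw` for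
`wx` (which no longer meets `D`); otherwise `w` or all its neighbours lie in `D`, and `uw` can be
dropped. If `u ∈ D` has at most one private neighbour, trade `u` for the edge `uz` to that
neighbour, or to any neighbour if there is none; this is the only place where isolated vertices
must be excluded.
-/

section MdsPotential

variable {α : Type*} [DecidableEq α] {D : Finset α} {M : Finset (Sym2 α)} {e : Sym2 α} {u : α}

def edgesMeeting (D : Finset α) (M : Finset (Sym2 α)) : Finset (Sym2 α) :=
  M.filter fun e => ∃ v ∈ D, v ∈ e

def mdsPotential (D : Finset α) (M : Finset (Sym2 α)) : ℕ :=
  3 * D.card + M.card + (edgesMeeting D M).card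

lemma mdsPotential_erase_edge_lt (he : e ∈ M) :
    mdsPotential D (M.erase e) < mdsPotential D M := by
  have hM := Finset.card_erase_lt_of_mem he
  have hE : (edgesMeeting D (M.erase e)).card ≤ (edgesMeeting D M).card :=
    Finset.card_le_card (Finset.filter_subset_filter _ (Finset.erase_subset _ _))
  unfold mdsPotential
  omega

lemma mdsPotential_replace_edge_lt {e' : Sym2 α} (he : e ∈ M) (heD : ∃ v ∈ D, v ∈ e)
    (he'D : ∀ v ∈ D, v ∉ e') : mdsPotential D (insert e' (M.erase e)) < mdsPotential D M := by
  have hM : (insert e' (M.erase e)).card ≤ M.card := by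
    have := Finset.card_insert_le e' (M.erase e)
    have := Finset.card_erase_add_one he
    omega
  have hE : edgesMeeting D (insert e' (M.erase e)) = (edgesMeeting D M).erase e := by
    have : ¬ ∃ v ∈ D, v ∈ e' := fun ⟨v, hv, hve'⟩ => he'D v hv hve'
    rw [edgesMeeting, Finset.filter_insert, if_neg this, Finset.filter_erase, edgesMeeting]
  have hE' : ((edgesMeeting D M).erase e).card < (edgesMeeting D M).card :=
    Finset.card_erase_lt_of_mem (Finset.mem_filter.mpr ⟨he, heD⟩)
  unfold mdsPotential
  rw [hE]
  omega

lemma mdsPotential_erase_vertex_insert_edge_lt (hu : u ∈ D) :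
    mdsPotential (D.erase u) (insert e M) < mdsPotential D M := by
  have hD := Finset.card_erase_add_one hu
  have hM := Finset.card_insert_le e M
  have hE : (edgesMeeting (D.erase u) (insert e M)).card ≤ (edgesMeeting D M).card + 1 := by
    refine (Finset.card_le_card fun f hf => ?_).trans (Finset.card_insert_le e _)
    simp only [edgesMeeting, Finset.mem_filter, Finset.mem_insert, Finset.mem_erase] at hf ⊢
    grind
  unfold mdsPotential
  omega

end MdsPotential

variable {G : SimpleGraph V} {D D' : Finset V} {M M' : Finset (Sym2 V)} {e : Sym2 V}
  {u v w x z : V}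

lemma mem_mVerts : v ∈ mVerts M ↔ ∃ e ∈ M, v ∈ e := by
  simp [mVerts]

lemma mem_mVerts_of_mem (he : e ∈ M) (hv : v ∈ e) : v ∈ mVerts M :=
  mem_mVerts.mpr ⟨e, he, hv⟩

lemma mem_mVerts_insert : v ∈ mVerts (insert e M) ↔ v ∈ e ∨ v ∈ mVerts M := by
  simp [mem_mVerts]

lemma mem_or_mem_mVerts_erase (hv : v ∈ mVerts M) (e : Sym2 V) :
    v ∈ e ∨ v ∈ mVerts (M.erase e) := by
  obtain ⟨f, hf, hvf⟩ := mem_mVerts.mp hv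
  by_cases hfe : f = e
  · exact .inl (hfe ▸ hvf)
  · exact .inr (mem_mVerts_of_mem (Finset.mem_erase.mpr ⟨hfe, hf⟩) hvf)

namespace IsMDS

lemma mono (h : IsMDS G D M) (hD : D ⊆ D') (hM' : ∀ e ∈ M', e ∈ G.edgeSet)
    (hV : ∀ v ∈ mVerts M, v ∈ D' ∨ v ∈ mVerts M') : IsMDS G D' M' := by
  obtain ⟨-, hdom, hcov⟩ := h
  refine ⟨hM', fun v hvD' hvM' => ?_, fun f hf hfM' => ?_⟩
  · obtain ⟨d, hd, hdv⟩ := hdom v (fun hvD => hvD' (hD hvD))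
      (fun hvM => (hV v hvM).elim hvD' hvM')
    exact ⟨d, hD hd, hdv⟩
  · by_cases hfM : f ∈ M
    · exact ⟨_, f.out_fst_mem, hV _ (mem_mVerts_of_mem hfM f.out_fst_mem)⟩
    · obtain ⟨v, hvf, hv⟩ := hcov f hf hfM
      exact ⟨v, hvf, hv.elim (fun hvD => .inl (hD hvD)) (hV v)⟩

lemma replace_edge (h : IsMDS G D M) (hu : u ∈ D) (hwx : G.Adj w x) :
    IsMDS G D (insert s(w, x) (M.erase s(u, w))) := by
  refine h.mono subset_rfl (fun f hf => ?_) (fun v hv => ?_)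
  · rcases Finset.mem_insert.mp hf with rfl | hf
    · exact hwx
    · exact h.1 f (Finset.mem_of_mem_erase hf)
  · rcases mem_or_mem_mVerts_erase hv s(u, w) with hv | hv
    · rcases Sym2.mem_iff.mp hv with rfl | rfl
      · exact .inl hu
      · exact .inr (mem_mVerts_insert.mpr (.inl (Sym2.mem_mk_left _ _)))
    · exact .inr (mem_mVerts_insert.mpr (.inr hv))

lemma erase_edge (h : IsMDS G D M) (hu : u ∈ D) (he : s(u, w) ∈ M)
    (hw : w ∈ D ∨ ∀ y, G.Adj w y → y ∈ D) : IsMDS G D (M.erase s(u, w)) := by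
  obtain ⟨hM, hdom, hcov⟩ := h
  have huw : G.Adj u w := hM _ he
  refine ⟨fun f hf => hM f (Finset.mem_of_mem_erase hf), fun v hvD hvM' => ?_,
    fun f hf hfM' => ?_⟩
  · by_cases hvM : v ∈ mVerts M
    · have hv := (mem_or_mem_mVerts_erase hvM s(u, w)).resolve_right hvM'
      rcases Sym2.mem_iff.mp hv with rfl | rfl
      · exact (hvD hu).elim
      · exact ⟨u, hu, huw⟩
    · exact hdom v hvD hvM
  · by_cases hfe : f = s(u, w)
    · exact ⟨u, hfe ▸ Sym2.mem_mk_left u w, .inl hu⟩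
    obtain ⟨v, hvf, hv | hvM⟩ := hcov f hf fun hfM => hfM' (Finset.mem_erase.mpr ⟨hfe, hfM⟩)
    · exact ⟨v, hvf, .inl hv⟩
    rcases mem_or_mem_mVerts_erase hvM s(u, w) with hv | hv
    · rcases Sym2.mem_iff.mp hv with rfl | rfl
      · exact ⟨v, hvf, .inl hu⟩
      rcases hw with hwD | hN
      · exact ⟨v, hvf, .inl hwD⟩
      obtain ⟨y, rfl⟩ := Sym2.mem_iff_exists.mp hvf
      exact ⟨y, Sym2.mem_mk_right _ _, .inl (hN y hf)⟩
    · exact ⟨v, hvf, .inr hv⟩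

lemma erase_vertex_insert_edge (h : IsMDS G D M) (hu : u ∈ D) (huz : G.Adj u z)
    (hpriv : ∀ v, PrivNbr G D M u v → v = z) : IsMDS G (D.erase u) (insert s(u, z) M) := by
  obtain ⟨hM, hdom, hcov⟩ := h
  have huM' : u ∈ mVerts (insert s(u, z) M) :=
    mem_mVerts_insert.mpr (.inl (Sym2.mem_mk_left _ _))
  refine ⟨fun f hf => ?_, fun v hvD' hvM' => ?_, fun f hf hfM' => ?_⟩
  · rcases Finset.mem_insert.mp hf with rfl | hf
    · exact huz
    · exact hM f hf
  · have hvuz : v ∉ s(u, z) := fun hv => hvM' (mem_mVerts_insert.mpr (.inl hv))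
    have hvu : v ≠ u := fun hvu => hvuz (hvu ▸ Sym2.mem_mk_left _ _)
    have hvM : v ∉ mVerts M := fun hv => hvM' (mem_mVerts_insert.mpr (.inr hv))
    have hvD : v ∉ D := fun hv => hvD' (Finset.mem_erase.mpr ⟨hvu, hv⟩)
    obtain ⟨d, hd, hdv⟩ := hdom v hvD hvM
    by_cases hdu : d = u
    · subst hdu
      by_contra! hno
      have hvz : v = z := hpriv v ⟨hvD, hvM, hdv, fun d' hd' hd'v => by
        by_contra hne
        exact hno d' (Finset.mem_erase.mpr ⟨hne, hd'⟩) hd'v⟩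
      exact hvuz (hvz ▸ Sym2.mem_mk_right _ _)
    · exact ⟨d, Finset.mem_erase.mpr ⟨hdu, hd⟩, hdv⟩
  · obtain ⟨v, hvf, hv | hvM⟩ := hcov f hf fun hfM => hfM' (Finset.mem_insert_of_mem hfM)
    · by_cases hvu : v = u
      · exact ⟨v, hvf, .inr (hvu ▸ huM')⟩
      · exact ⟨v, hvf, .inl (Finset.mem_erase.mpr ⟨hvu, hv⟩)⟩
    · exact ⟨v, hvf, .inr (mem_mVerts_insert.mpr (.inr hvM))⟩

lemma exists_improvement_of_mem_mVerts (h : IsMDS G D M) (hu : u ∈ D) (huM : u ∈ mVerts M) :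
    ∃ D' M', IsMDS G D' M' ∧ D'.card + M'.card ≤ D.card + M.card ∧
      mdsPotential D' M' < mdsPotential D M := by
  obtain ⟨e, he, hue⟩ := mem_mVerts.mp huM
  obtain ⟨w, rfl⟩ := Sym2.mem_iff_exists.mp hue
  by_cases hswap : w ∉ D ∧ ∃ x, G.Adj w x ∧ x ∉ D
  · obtain ⟨hw, x, hwx, hx⟩ := hswap
    refine ⟨D, _, h.replace_edge hu hwx, ?_,
      mdsPotential_replace_edge_lt he ⟨u, hu, hue⟩ ?_⟩
    · have := Finset.card_insert_le s(w, x) (M.erase s(u, w))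
      have := Finset.card_erase_add_one he
      omega
    · intro v hv hvwx
      rcases Sym2.mem_iff.mp hvwx with rfl | rfl <;> contradiction
  · refine ⟨D, _, h.erase_edge hu he
      (or_iff_not_imp_left.mpr fun hw y hwy => by_contra fun hy => hswap ⟨hw, y, hwy, hy⟩),
      ?_, mdsPotential_erase_edge_lt he⟩
    have := Finset.card_erase_le (s := M) (a := s(u, w))
    omega

lemma exists_improvement_of_subsingleton_privNbr (h : IsMDS G D M) (hu : u ∈ D)
    (hnbr : ∃ z, G.Adj u z)
    (huniq : ∀ v₁ v₂, PrivNbr G D M u v₁ → PrivNbr G D M u v₂ → v₁ = v₂) :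
    ∃ D' M', IsMDS G D' M' ∧ D'.card + M'.card ≤ D.card + M.card ∧
      mdsPotential D' M' < mdsPotential D M := by
  obtain ⟨z, huz, hz⟩ : ∃ z, G.Adj u z ∧ ∀ v, PrivNbr G D M u v → v = z := by
    by_cases hp : ∃ v, PrivNbr G D M u v
    · obtain ⟨v, hv⟩ := hp
      exact ⟨v, hv.2.2.1, fun v' hv' => huniq v' v hv' hv⟩
    · obtain ⟨z, huz⟩ := hnbr
      exact ⟨z, huz, fun v hv => (hp ⟨v, hv⟩).elim⟩
  refine ⟨_, _, h.erase_vertex_insert_edge hu huz hz, ?_,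
    mdsPotential_erase_vertex_insert_edge_lt hu⟩
  have := Finset.card_erase_add_one hu
  have := Finset.card_insert_le s(u, z) M
  omega

lemma exists_improvement (hiso : ∀ v : V, ∃ w, G.Adj v w) (h : IsMDS G D M)
    (hnice : ¬ IsNiceMDS G D M) :
    ∃ D' M', IsMDS G D' M' ∧ D'.card + M'.card ≤ D.card + M.card ∧
      mdsPotential D' M' < mdsPotential D M := by
  by_cases hdisj : Disjoint D (mVerts M)
  · obtain ⟨u, hu, huniq⟩ :
        ∃ u ∈ D, ∀ v₁ v₂, PrivNbr G D M u v₁ → PrivNbr G D M u v₂ → v₁ = v₂ := by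
      by_contra! hall
      exact hnice ⟨h, hdisj, fun u hu => by
        obtain ⟨v₁, v₂, hv₁, hv₂, hne⟩ := hall u hu
        exact ⟨v₁, v₂, hne, hv₁, hv₂⟩⟩
    exact h.exists_improvement_of_subsingleton_privNbr hu (hiso u) huniq
  · obtain ⟨u, hu, huM⟩ := Finset.not_disjoint_iff.mp hdisj
    exact h.exists_improvement_of_mem_mVerts hu huM

lemma exists_isNiceMDS (hiso : ∀ v : V, ∃ w, G.Adj v w) (h : IsMDS G D M) :
    ∃ D' M', IsNiceMDS G D' M' ∧ D'.card + M'.card ≤ D.card + M.card := by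
  induction hn : mdsPotential D M using Nat.strong_induction_on generalizing D M with
  | _ n ih =>
    by_cases hnice : IsNiceMDS G D M
    · exact ⟨D, M, hnice, le_rfl⟩
    obtain ⟨D₁, M₁, h₁, hsize₁, hlt⟩ := h.exists_improvement hiso hnice
    obtain ⟨D', M', hnice', hsize'⟩ := ih _ (hn ▸ hlt) h₁ rfl
    exact ⟨D', M', hnice', hsize'.trans hsize₁⟩

end IsMDS

/-- For any graph without isolated vertices, there is a mixed dominating set of
size at most `k` iff there is a nice mixed dominating set of size at most `k`. -/
theorem stmt5 (G : SimpleGraph V) (hiso : ∀ v : V, ∃ w, G.Adj v w) (k : ℕ) :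
    (∃ (D : Finset V) (M : Finset (Sym2 V)), IsMDS G D M ∧ D.card + M.card ≤ k) ↔
    (∃ (D : Finset V) (M : Finset (Sym2 V)), IsNiceMDS G D M ∧ D.card + M.card ≤ k) := by
  constructor
  · rintro ⟨D, M, h, hk⟩
    obtain ⟨D', M', hnice, hsize⟩ := h.exists_isNiceMDS hiso
    exact ⟨D', M', hnice, hsize.trans hk⟩
  · rintro ⟨D, M, hnice, hk⟩
    exact ⟨D, M, hnice.1, hk⟩
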